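/- Let d ≥ 2 be an integer. There exist a constant K and an integer N₀ such that for all N ≥ N₀, Σ_{λ' ∈ Λ_{N+1}} (Σ_{i ∈ S(λ')} r_{λ'}(i))² ≤ (K/N²) · Σ_{λ' ∈ Λ_{N+1}} (#S(λ'))² · ∏_{j=1}^d p_j(λ')². (In the notation of the paper's Lemma 1, t₂ = O(N^{−2}).) -/

import Mathlib

open Finset

/-- The value after index `i` in `λ`, with the convention `λ_{d+1} := 0`. -/
def nextVal (d : ℕ) (lam : Fin d → ℕ) (i : Fin d) : ℕ :=
  if h : (i : ℕ) + 1 < d then lam ⟨(i : ℕ) + 1, h⟩ else 0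

/-- `Λ_M`: nonincreasing `d`-tuples of natural numbers summing to `M`. -/
def Lam (d M : ℕ) : Finset (Fin d → ℕ) :=
  (Fintype.piFinset fun _ => Finset.range (M + 1)).filter
    (fun lam => (∀ i : Fin d, nextVal d lam i ≤ lam i) ∧ ∑ j, lam j = M)

/-- `P_M`: strictly decreasing `d`-tuples of positive naturals summing to `M`. -/
def PP (d M : ℕ) : Finset (Fin d → ℕ) :=
  (Lam d M).filter (fun lam => ∀ i : Fin d, nextVal d lam i < lam i)

/-- The gaps `p_j(λ) = λ_j - λ_{j+1}`. -/
def pgap (d : ℕ) (lam : Fin d → ℕ) (j : Fin d) : ℕ := lam j - nextVal d lam j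

/-- `S(λ)`: the set of indices `i` with `λ_i > λ_{i+1}`. -/
def SS (d : ℕ) (lam : Fin d → ℕ) : Finset (Fin d) :=
  Finset.univ.filter (fun i => nextVal d lam i < lam i)

/-- `λ - e_i`: decrease the `i`-th entry by one. -/
def dec (d : ℕ) (lam : Fin d → ℕ) (i : Fin d) : Fin d → ℕ :=
  Function.update lam i (lam i - 1)

/-- The previous index `i - 1`. -/
def prev (d : ℕ) (i : Fin d) : Fin d :=
  ⟨(i : ℕ) - 1, Nat.lt_of_le_of_lt (Nat.sub_le _ _) i.isLt⟩

/-- `p_E(λ) = ∏_{j ∉ E} p_j(λ)`. -/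
def pE (d : ℕ) (lam : Fin d → ℕ) (E : Finset (Fin d)) : ℕ :=
  ∏ j ∈ Eᶜ, pgap d lam j

/-- `r_{λ'}(i) = -p_{{i}}(λ') + (p_{{i-1}}(λ') - p_{{i,i-1}}(λ')` if `i > 1`, else `0)`. -/
def rr (d : ℕ) (lam : Fin d → ℕ) (i : Fin d) : ℤ :=
  -(pE d lam {i} : ℤ) +
    (if 0 < (i : ℕ) then
      ((pE d lam {prev d i} : ℤ) - (pE d lam ({i, prev d i} : Finset (Fin d)) : ℤ))
    else 0)

/-! Both sides are estimated crudely. Each `|r_{λ'}(i)|` is at most `2 (N+1)^{d-1}` and `Λ_{N+1}`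
has at most `(N+2)^{d-1}` elements (a partition is determined by its last `d - 1` parts), so the
left side is `O(N^{3d-3})`. On the right, the partitions whose gaps `p_2, …, p_d` lie in `[m, 2m)`
for `m ≈ N / (2d²)`, with `p_1` absorbing the rest of the weight `∑ j p_j = N + 1`, are `m^{d-1}`
distinct elements of `Λ_{N+1}` each contributing at least `m^{2d}`, so the right-hand sum is
`Ω(N^{3d-1})`. -/

section UpperBound

variable {d M : ℕ} {lam : Fin d → ℕ}

lemma le_of_mem_Lam (h : lam ∈ Lam d M) (j : Fin d) : lam j ≤ M := by
  simp only [Lam, mem_filter, Fintype.mem_piFinset, mem_range] at h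
  exact Nat.lt_succ_iff.mp (h.1 j)

lemma pgap_le_of_mem_Lam (h : lam ∈ Lam d M) (j : Fin d) : pgap d lam j ≤ M :=
  (Nat.sub_le _ _).trans (le_of_mem_Lam h j)

lemma mem_SS_iff_pgap_pos {i : Fin d} : i ∈ SS d lam ↔ 0 < pgap d lam i := by
  simp [SS, pgap]

lemma pE_le_of_mem_Lam (h : lam ∈ Lam d M) (hM : 1 ≤ M) {E : Finset (Fin d)}
    (hE : E.Nonempty) : pE d lam E ≤ M ^ (d - 1) :=
  calc pE d lam E ≤ M ^ #Eᶜ := prod_le_pow_card _ _ _ fun j _ => pgap_le_of_mem_Lam h j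
    _ ≤ M ^ (d - 1) := by
      apply Nat.pow_le_pow_right hM
      rw [card_compl, Fintype.card_fin]
      have := hE.card_pos
      omega

lemma abs_rr_le (h : lam ∈ Lam d M) (hM : 1 ≤ M) (i : Fin d) :
    |rr d lam i| ≤ 2 * M ^ (d - 1) := by
  have hi := pE_le_of_mem_Lam h hM (singleton_nonempty i)
  have hprev := pE_le_of_mem_Lam h hM (singleton_nonempty (prev d i))
  have hboth := pE_le_of_mem_Lam h hM (insert_nonempty i {prev d i})
  zify at hi hprev hboth
  rw [rr, abs_le]
  split_ifs <;> constructor <;> linarith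

lemma abs_sum_rr_le (h : lam ∈ Lam d M) (hM : 1 ≤ M) :
    |∑ i ∈ SS d lam, rr d lam i| ≤ 2 * d * M ^ (d - 1) :=
  calc |∑ i ∈ SS d lam, rr d lam i| ≤ ∑ i ∈ SS d lam, |rr d lam i| := abs_sum_le_sum_abs _ _
    _ ≤ #(SS d lam) • (2 * M ^ (d - 1) : ℤ) :=
      sum_le_card_nsmul _ _ _ fun i _ => abs_rr_le h hM i
    _ ≤ d • (2 * M ^ (d - 1) : ℤ) := by
      gcongr
      exact (card_le_univ _).trans (Fintype.card_fin d).le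
    _ = 2 * d * M ^ (d - 1) := by rw [nsmul_eq_mul]; ring

lemma card_Lam_le (hd : 1 ≤ d) : #(Lam d M) ≤ (M + 1) ^ (d - 1) := by
  obtain ⟨e, rfl⟩ : ∃ e, d = e + 1 := ⟨d - 1, by omega⟩
  calc #(Lam (e + 1) M) ≤ #(Fintype.piFinset fun _ : Fin e => range (M + 1)) := by
        refine card_le_card_of_injOn Fin.tail (fun lam hlam => ?_) fun a ha b hb hab => ?_
        · simpa [Fin.tail, Nat.lt_succ_iff] using fun j : Fin e => le_of_mem_Lam hlam j.succ
        · have hsum : ∑ j, a j = ∑ j, b j := by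
            rw [(mem_filter.mp ha).2.2, (mem_filter.mp hb).2.2]
          have htail : ∀ j : Fin e, a j.succ = b j.succ := congrFun hab
          simp only [Fin.sum_univ_succ, htail, add_left_inj] at hsum
          rw [← Fin.cons_self_tail a, ← Fin.cons_self_tail b, hab, hsum]
    _ = (M + 1) ^ (e + 1 - 1) := by simp

end UpperBound

section OfGaps

def ofGaps (d : ℕ) (p : Fin d → ℕ) : Fin d → ℕ := fun j => ∑ k ∈ Ici j, p k

variable {d : ℕ} (p : Fin d → ℕ)

lemma nextVal_ofGaps (j : Fin d) : nextVal d (ofGaps d p) j = ∑ k ∈ Ioi j, p k := by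
  unfold nextVal ofGaps
  split_ifs with h
  · congr 1
    ext k
    simp only [mem_Ici, mem_Ioi, Fin.le_def, Fin.lt_def]
    omega
  · refine (sum_eq_zero fun k hk => absurd (mem_Ioi.mp hk) ?_).symm
    rw [Fin.lt_def]
    omega

@[simp]
lemma pgap_ofGaps (j : Fin d) : pgap d (ofGaps d p) j = p j := by
  rw [pgap, nextVal_ofGaps, ofGaps, ← Ioi_insert, sum_insert notMem_Ioi_self, Nat.add_sub_cancel]

lemma ofGaps_injective : Function.Injective (ofGaps d) := fun p q h =>
  funext fun j => by rw [← pgap_ofGaps p, ← pgap_ofGaps q, h]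

lemma sum_ofGaps : ∑ j, ofGaps d p j = ∑ k, (k + 1) * p k := by
  simp only [ofGaps]
  rw [sum_comm' (t' := univ) (s' := Iic) (fun j k => by simp)]
  simp [Fin.card_Iic]

lemma ofGaps_mem_Lam {M : ℕ} (h : ∑ k, (k + 1) * p k = M) : ofGaps d p ∈ Lam d M := by
  have hsum : ∑ j, ofGaps d p j = M := (sum_ofGaps p).trans h
  simp only [Lam, mem_filter, Fintype.mem_piFinset, mem_range, Nat.lt_succ_iff]
  refine ⟨fun j => hsum ▸ single_le_sum (fun _ _ => Nat.zero_le _) (mem_univ j),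
    fun j => ?_, hsum⟩
  rw [nextVal_ofGaps]
  exact sum_le_sum_of_subset Ioi_subset_Ici_self

end OfGaps

section LowerBound

variable {d N m : ℕ}

lemma pow_le_card_filter_pgap_ge (hd : 1 ≤ d) (h : 2 * d ^ 2 * m ≤ N) :
    m ^ (d - 1) ≤ #{lam ∈ Lam d (N + 1) | ∀ j, m ≤ pgap d lam j} := by
  obtain ⟨e, rfl⟩ : ∃ e, d = e + 1 := ⟨d - 1, by omega⟩
  set box := Fintype.piFinset fun _ : Fin e => Ico m (2 * m)
  -- `w t` is the weight `∑ (k + 1) p_k` of the gaps `p = Fin.cons _ t` after the first one.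
  obtain ⟨w, hw_def⟩ : ∃ w : (Fin e → ℕ) → ℕ, ∀ t, w t = ∑ k : Fin e, (k + 1 + 1) * t k :=
    ⟨_, fun _ => rfl⟩
  have hw : ∀ t ∈ box, w t + m ≤ N + 1 := by
    intro t ht
    have : w t ≤ e * ((e + 1) * (2 * m)) := by
      rw [hw_def]
      simpa using sum_le_card_nsmul (univ : Finset (Fin e)) (fun k => (k + 1 + 1) * t k)
        ((e + 1) * (2 * m)) fun k _ =>
          Nat.mul_le_mul (by omega) (mem_Ico.mp (Fintype.mem_piFinset.mp ht k)).2.le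
    nlinarith
  calc m ^ (e + 1 - 1) = #box := by simp [box, two_mul]
    _ ≤ _ := by
      refine card_le_card_of_injOn (fun t => ofGaps (e + 1) (Fin.cons (N + 1 - w t) t))
        (fun t ht => ?_) (fun t _ t' _ htt => ?_)
      · have hwt := hw t ht
        simp only [mem_coe, mem_filter, pgap_ofGaps]
        refine ⟨ofGaps_mem_Lam _ ?_, Fin.cases ?_ fun k => ?_⟩
        · simp only [Fin.sum_univ_succ, Fin.cons_zero, Fin.cons_succ, Fin.val_zero,
            Fin.val_succ, hw_def] at hwt ⊢
          omega
        · simp only [Fin.cons_zero]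
          omega
        · simpa using (mem_Ico.mp (Fintype.mem_piFinset.mp ht k)).1
      · exact (Fin.cons_inj.mp (ofGaps_injective htt)).2

lemma pow_le_sum_card_SS_sq_mul_prod_pgap_sq (hd : 1 ≤ d) (hm : 1 ≤ m)
    (h : 2 * d ^ 2 * m ≤ N) :
    m ^ (d - 1) * (m ^ 2) ^ d ≤
      ∑ lam ∈ Lam d (N + 1), #(SS d lam) ^ 2 * ∏ j, pgap d lam j ^ 2 :=
  calc m ^ (d - 1) * (m ^ 2) ^ d
      ≤ #{lam ∈ Lam d (N + 1) | ∀ j, m ≤ pgap d lam j} • (m ^ 2) ^ d :=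
        Nat.mul_le_mul_right _ (pow_le_card_filter_pgap_ge hd h)
    _ ≤ ∑ lam ∈ Lam d (N + 1) with ∀ j, m ≤ pgap d lam j,
          #(SS d lam) ^ 2 * ∏ j, pgap d lam j ^ 2 := by
      refine card_nsmul_le_sum _ _ _ fun lam hlam => ?_
      have hgap := (mem_filter.mp hlam).2
      have hSS : 0 < #(SS d lam) :=
        card_pos.mpr ⟨⟨0, hd⟩, mem_SS_iff_pgap_pos.mpr (hm.trans (hgap _))⟩
      calc (m ^ 2) ^ d ≤ ∏ j, pgap d lam j ^ 2 := by
            simpa using pow_card_le_prod univ _ _ fun j _ => Nat.pow_le_pow_left (hgap j) 2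
        _ ≤ _ := Nat.le_mul_of_pos_left _ (pow_pos hSS 2)
    _ ≤ _ := sum_le_sum_of_subset_of_nonneg (filter_subset _ _) fun _ _ _ => Nat.zero_le _

end LowerBound

section Asymptotics

variable {d N : ℕ}

lemma sum_sq_sum_rr_le (hd : 1 ≤ d) (hN : 2 ≤ N) :
    ∑ lam ∈ Lam d (N + 1), (∑ i ∈ SS d lam, (rr d lam i : ℝ)) ^ 2
      ≤ 4 * d ^ 2 * (2 * N) ^ (3 * (d - 1)) := by
  have hterm : ∀ lam ∈ Lam d (N + 1),
      (∑ i ∈ SS d lam, (rr d lam i : ℝ)) ^ 2 ≤ (2 * d * (N + 1) ^ (d - 1)) ^ 2 := by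
    intro lam hlam
    have h : |∑ i ∈ SS d lam, (rr d lam i : ℝ)| ≤ 2 * d * (N + 1) ^ (d - 1) := by
      exact_mod_cast abs_sum_rr_le hlam (Nat.le_add_left 1 N)
    rw [← sq_abs]
    exact pow_le_pow_left₀ (abs_nonneg _) h 2
  have hN' : (2 : ℝ) ≤ N := by exact_mod_cast hN
  calc _ ≤ #(Lam d (N + 1)) • ((2 * d * (N + 1) ^ (d - 1)) ^ 2 : ℝ) :=
        sum_le_card_nsmul _ _ _ hterm
    _ ≤ (N + 2) ^ (d - 1) * (2 * d * (N + 1) ^ (d - 1)) ^ 2 := by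
        rw [nsmul_eq_mul]
        gcongr
        exact_mod_cast card_Lam_le hd
    _ ≤ (2 * N) ^ (d - 1) * (2 * d * (2 * N) ^ (d - 1)) ^ 2 := by
        gcongr <;> linarith
    _ = _ := by ring

lemma div_pow_le_sum_card_SS_sq_mul_prod_pgap_sq (hd : 1 ≤ d) (hN : 2 * d ^ 2 ≤ N) :
    ((N : ℝ) / (4 * d ^ 2)) ^ (3 * (d - 1) + 2) ≤
      ∑ lam ∈ Lam d (N + 1), (#(SS d lam) : ℝ) ^ 2 * ∏ j, (pgap d lam j : ℝ) ^ 2 := by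
  set m := N / (2 * d ^ 2)
  have hd2 : 0 < 2 * d ^ 2 := by positivity
  have hm : 1 ≤ m := (Nat.le_div_iff_mul_le hd2).mpr (by omega)
  have hNm : N ≤ m * (4 * d ^ 2) := by
    have hlt : N < 2 * d ^ 2 * (m + 1) := Nat.lt_mul_div_succ N hd2
    nlinarith [Nat.mul_le_mul_left (2 * d ^ 2) hm]
  have hNm' : (N : ℝ) / (4 * d ^ 2) ≤ m := by
    rw [div_le_iff₀ (by positivity)]
    exact_mod_cast hNm
  calc _ ≤ (m : ℝ) ^ (3 * (d - 1) + 2) := by gcongr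
    _ = ((m ^ (d - 1) * (m ^ 2) ^ d : ℕ) : ℝ) := by
        push_cast
        rw [← pow_mul, ← pow_add]
        congr 1
        omega
    _ ≤ _ := by
        exact_mod_cast pow_le_sum_card_SS_sq_mul_prod_pgap_sq hd hm (Nat.mul_div_le N _)

end Asymptotics

/-- t₂ = O(1/N²): there are `K` and `N₀` such that for all `N ≥ N₀`,
`Σ_{λ'} (Σ_{i∈S(λ')} r_{λ'}(i))² ≤ (K/N²)·Σ_{λ'} (#S(λ'))²·∏_j p_j(λ')²`. -/
theorem stmt12 (d : ℕ) (hd : 2 ≤ d) :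
    ∃ K : ℝ, ∃ N₀ : ℕ, ∀ N : ℕ, N₀ ≤ N →
      ∑ lam' ∈ Lam d (N + 1), (∑ i ∈ SS d lam', (rr d lam' i : ℝ)) ^ 2
        ≤ (K / N ^ 2) * ∑ lam' ∈ Lam d (N + 1),
            ((SS d lam').card : ℝ) ^ 2 * ∏ j, (pgap d lam' j : ℝ) ^ 2 := by
  refine ⟨4 * d ^ 2 * 2 ^ (3 * (d - 1)) * (4 * d ^ 2) ^ (3 * (d - 1) + 2), 2 * d ^ 2,
    fun N hN => ?_⟩
  have hN2 : 2 ≤ N := by nlinarith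
  have hNpos : (0 : ℝ) < N := by exact_mod_cast (by omega : 0 < N)
  have hdpos : (0 : ℝ) < d := by exact_mod_cast (by omega : 0 < d)
  calc _ ≤ (4 * d ^ 2 * (2 * N) ^ (3 * (d - 1)) : ℝ) := sum_sq_sum_rr_le (by omega) hN2
    _ = 4 * d ^ 2 * 2 ^ (3 * (d - 1)) * (4 * d ^ 2) ^ (3 * (d - 1) + 2) / N ^ 2 *
          ((N : ℝ) / (4 * d ^ 2)) ^ (3 * (d - 1) + 2) := by
        rw [div_pow]
        field_simp
        ring
    _ ≤ _ := by
        gcongr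
        exact div_pow_le_sum_card_SS_sq_mul_prod_pgap_sq (by omega) hN
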